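/- Let Id be the set of identifiers with the partial order ≤ induced by the match predicate. Define g : Id × Id → Id recursively by: g(α,α)=α; g(α₁⟨;⟩,α₂⟨;⟩)=g(α₁,α₂)⟨;⟩; g(α₁⟨\c⟩,α₂⟨\c⟩)=g(α₁,α₂)⟨\c⟩; g(α₁⟨∥₁⟩,α₂⟨∥₁⟩)=g(α₁,α₂)⟨∥₁⟩; g(α₁⟨∥₂⟩,α₂⟨∥₂⟩)=g(α₁,α₂)⟨∥₂⟩; g(α₁,α₂)=• otherwise. Then g(α₁,α₂) is the greatest lower bound of α₁ and α₂ with respect to ≤: g(α₁,α₂) ≤ α₁, g(α₁,α₂) ≤ α₂, and for all α, if α ≤ α₁ and α ≤ α₂ then α ≤ g(α₁,α₂). -/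
import Mathlib


/-- Identifiers: `α ::= • | (;•) | α⟨;⟩ | α⟨\c⟩ | α⟨∥₁⟩ | α⟨∥₂⟩`. -/
inductive Ident : Type where
  | hole : Ident
  | seqHole : Ident
  | seq : Ident → Ident
  | res : Ident → ℕ → Ident
  | parL : Ident → Ident
  | parR : Ident → Ident
deriving DecidableEq

/-- The `match` predicate inducing the partial order `≤`. -/
def imatch : Ident → Ident → Bool
  | .hole, _ => true
  | .seqHole, .seqHole => true
  | .seq a, .seq b => imatch a b
  | .res a c, .res b c' => (c == c') && imatch a b
  | .parL a, .parL b => imatch a b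
  | .parR a, .parR b => imatch a b
  | _, _ => false

/-- `g(α₁,α₂)`: componentwise on agreeing constructors (with `g(α,α)=α`), otherwise `•`. -/
def glb : Ident → Ident → Ident
  | .seqHole, .seqHole => .seqHole
  | .seq a, .seq b => .seq (glb a b)
  | .res a c, .res b c' => if c = c' then .res (glb a b) c else .hole
  | .parL a, .parL b => .parL (glb a b)
  | .parR a, .parR b => .parR (glb a b)
  | _, _ => .hole

/-- `g(α₁,α₂)` is the greatest lower bound of `α₁` and `α₂` with respect to `≤`. -/
theorem stmt12 (a b : Ident) :
    imatch (glb a b) a = true ∧ imatch (glb a b) b = true ∧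
      ∀ c : Ident, imatch c a = true → imatch c b = true → imatch c (glb a b) = true := by
  induction a generalizing b with
  | hole => refine ⟨rfl, rfl, fun c hc hc' => ?_⟩; cases c <;> simp_all [imatch, glb]
  | seqHole =>
    cases b <;> refine ⟨rfl, ?_, fun c hc hc' => ?_⟩ <;>
      first | rfl | (cases c <;> simp_all [imatch, glb])
  | seq a ih =>
    cases b with
    | seq b =>
      obtain ⟨h1, h2, h3⟩ := ih b
      exact ⟨h1, h2, fun c hc hc' => by cases c <;> simp_all [imatch, glb]⟩
    | _ => refine ⟨rfl, rfl, fun c hc hc' => ?_⟩ <;> cases c <;> simp_all [imatch, glb]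
  | res a n ih =>
    cases b with
    | res b m =>
      obtain ⟨h1, h2, h3⟩ := ih b
      by_cases h : n = m
      · subst h
        refine ⟨?_, ?_, fun c hc hc' => ?_⟩
        · simp [glb, imatch, h1]
        · simp [glb, imatch, h2]
        · cases c <;> simp_all [imatch, glb]
      · refine ⟨?_, ?_, fun c hc hc' => ?_⟩ <;>
          first | (cases c <;> simp_all [imatch, glb]) | simp [glb, imatch, h]
    | _ => refine ⟨rfl, rfl, fun c hc hc' => ?_⟩ <;> cases c <;> simp_all [imatch, glb]
  | parL a ih =>
    cases b with
    | parL b =>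
      obtain ⟨h1, h2, h3⟩ := ih b
      exact ⟨h1, h2, fun c hc hc' => by cases c <;> simp_all [imatch, glb]⟩
    | _ => refine ⟨rfl, rfl, fun c hc hc' => ?_⟩ <;> cases c <;> simp_all [imatch, glb]
  | parR a ih =>
    cases b with
    | parR b =>
      obtain ⟨h1, h2, h3⟩ := ih b
      exact ⟨h1, h2, fun c hc hc' => by cases c <;> simp_all [imatch, glb]⟩
    | _ => refine ⟨rfl, rfl, fun c hc hc' => ?_⟩ <;> cases c <;> simp_all [imatch, glb]
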